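/- Let H be a complex Hilbert space, T a bounded selfadjoint operator on H, and J a fundamental symmetry on H with ν₋(J) < ∞. Then ν₋(J − T∘J∘T) + ν₋(J) = ν₋(J − T) + ν₋(J + T) in ℕ∪{∞}. In particular, ν₋(J − T∘J∘T) < ∞ if and only if both ν₋(J − T) < ∞ and ν₋(J + T) < ∞. -/

import Mathlib

open ContinuousLinearMap

noncomputable section

/-- The negative index `ν₋(S)` of a bounded operator on a complex Hilbert space: the
supremum of `dim M` over all subspaces `M` on which the quadratic form
`x ↦ ⟨Sx, x⟩` is negative definite. -/
noncomputable def negIndex {H : Type*} [NormedAddCommGroup H] [InnerProductSpace ℂ H]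
    (S : H →L[ℂ] H) : ℕ∞ :=
  ⨆ M : {M : Submodule ℂ H // ∀ x ∈ M, x ≠ 0 → (inner ℂ (S x) x : ℂ).re < 0},
    (Module.rank ℂ (M : Submodule ℂ H)).toENat

/-- The positive index `ν₊(S)`. -/
noncomputable def posIndex {H : Type*} [NormedAddCommGroup H] [InnerProductSpace ℂ H]
    (S : H →L[ℂ] H) : ℕ∞ :=
  ⨆ M : {M : Submodule ℂ H // ∀ x ∈ M, x ≠ 0 → 0 < (inner ℂ (S x) x : ℂ).re},
    (Module.rank ℂ (M : Submodule ℂ H)).toENat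

/-- The modulus `|C| = (C*C)^{1/2}` of a bounded operator. -/
noncomputable def absOp {H₁ H₂ : Type*} [NormedAddCommGroup H₁] [InnerProductSpace ℂ H₁]
    [NormedAddCommGroup H₂] [InnerProductSpace ℂ H₂] [CompleteSpace H₁] [CompleteSpace H₂]
    (C : H₁ →L[ℂ] H₂) : H₁ →L[ℂ] H₁ :=
  CFC.sqrt (adjoint C ∘L C)

/-- The positive square root `|C|^{1/2}` of the modulus of a bounded operator. -/
noncomputable def sqrtAbs {H₁ H₂ : Type*} [NormedAddCommGroup H₁] [InnerProductSpace ℂ H₁]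
    [NormedAddCommGroup H₂] [InnerProductSpace ℂ H₂] [CompleteSpace H₁] [CompleteSpace H₂]
    (C : H₁ →L[ℂ] H₂) : H₁ →L[ℂ] H₁ :=
  CFC.sqrt (absOp C)

/-- The block operator `[[A₁₁, A₁₂], [A₂₁, A₂₂]]` on the Hilbert direct sum `H₁ ⊕ H₂`
(realized as `WithLp 2 (H₁ × H₂)`). -/
noncomputable def blockOp {H₁ H₂ : Type*} [NormedAddCommGroup H₁] [InnerProductSpace ℂ H₁]
    [NormedAddCommGroup H₂] [InnerProductSpace ℂ H₂]
    (A11 : H₁ →L[ℂ] H₁) (A12 : H₂ →L[ℂ] H₁) (A21 : H₁ →L[ℂ] H₂) (A22 : H₂ →L[ℂ] H₂) :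
    WithLp 2 (H₁ × H₂) →L[ℂ] WithLp 2 (H₁ × H₂) :=
  ((WithLp.prodContinuousLinearEquiv 2 ℂ H₁ H₂).symm : H₁ × H₂ →L[ℂ] WithLp 2 (H₁ × H₂)) ∘L
    ((A11 ∘L fst ℂ H₁ H₂ + A12 ∘L snd ℂ H₁ H₂).prod (A21 ∘L fst ℂ H₁ H₂ + A22 ∘L snd ℂ H₁ H₂)) ∘L
    ((WithLp.prodContinuousLinearEquiv 2 ℂ H₁ H₂) : WithLp 2 (H₁ × H₂) →L[ℂ] H₁ × H₂)

/-!
Both sides are the negative index of the block operator `[[J, T], [T, J]]` on `H ⊕ H`, which is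
congruent to `diag(J - TJT, J)` by completing the square (`J⁻¹ = J`) and to `2 • diag(J + T, J - T)`
via `(x, y) ↦ (x + y, x - y)`. The negative index is a congruence invariant and is additive on
block-diagonal operators. The nontrivial half of additivity rests on the fact that if `N` is a
negative subspace of maximal dimension `ν₋(A) < ∞`, the form of `A` is nonnegative on `(A N)ᗮ`: a
negative vector there would enlarge `N`.
-/

open Module Submodule
open scoped InnerProductSpace

section NegIndex

variable {E F : Type*} [NormedAddCommGroup E] [InnerProductSpace ℂ E]
  [NormedAddCommGroup F] [InnerProductSpace ℂ F]

def NegDefOn (S : E →L[ℂ] E) (M : Submodule ℂ E) : Prop :=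
  ∀ x ∈ M, x ≠ 0 → (⟪S x, x⟫_ℂ).re < 0

instance (S : E →L[ℂ] E) :
    Nonempty {M : Submodule ℂ E // ∀ x ∈ M, x ≠ 0 → (⟪S x, x⟫_ℂ).re < 0} :=
  ⟨⟨⊥, fun _ hx hx0 => absurd ((mem_bot ℂ).mp hx) hx0⟩⟩

lemma NegDefOn.rank_le_negIndex {S : E →L[ℂ] E} {M : Submodule ℂ E} (hM : NegDefOn S M) :
    (Module.rank ℂ M).toENat ≤ negIndex S :=
  le_iSup (fun M : {M : Submodule ℂ E // ∀ x ∈ M, x ≠ 0 → (⟪S x, x⟫_ℂ).re < 0} =>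
    (Module.rank ℂ M.1).toENat) ⟨M, hM⟩

lemma NegDefOn.finrank_le_negIndex {S : E →L[ℂ] E} {M : Submodule ℂ E} [FiniteDimensional ℂ M]
    (hM : NegDefOn S M) : (finrank ℂ M : ℕ∞) ≤ negIndex S := by
  simpa [← finrank_eq_rank] using hM.rank_le_negIndex

lemma negIndex_le_of_injective {S : E →L[ℂ] E} {S' : F →L[ℂ] F} {G : E →ₗ[ℂ] F}
    (hG : Function.Injective G) (h : ∀ x, (⟪S x, x⟫_ℂ).re < 0 → (⟪S' (G x), G x⟫_ℂ).re < 0) :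
    negIndex S ≤ negIndex S' := by
  refine iSup_le fun ⟨M, hM⟩ => ?_
  have hGM : NegDefOn S' (M.map G) := by
    rintro _ ⟨x, hx, rfl⟩ hGx
    exact h x (hM x hx fun hx0 => hGx (by simp [hx0]))
  calc (Module.rank ℂ M).toENat ≤ (Module.rank ℂ (M.map G)).toENat := by
        have := OrderHomClass.mono Cardinal.toENat
          ((G.submoduleMap M).lift_rank_le_of_injective (G.submoduleMap_injective hG M))
        rwa [Cardinal.toENat_lift, Cardinal.toENat_lift] at this
    _ ≤ negIndex S' := hGM.rank_le_negIndex

lemma negIndex_eq_of_linearEquiv {S : E →L[ℂ] E} {S' : F →L[ℂ] F} (G : E ≃ₗ[ℂ] F) {c : ℝ}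
    (hc : 0 < c) (h : ∀ x, (⟪S' (G x), G x⟫_ℂ).re = c * (⟪S x, x⟫_ℂ).re) :
    negIndex S' = negIndex S := by
  refine le_antisymm (negIndex_le_of_injective G.symm.injective fun y hy => ?_)
    (negIndex_le_of_injective G.injective fun x hx => ?_)
  · have := h (G.symm y)
    rw [G.apply_symm_apply] at this
    rw [LinearEquiv.coe_coe]
    nlinarith
  · rw [LinearEquiv.coe_coe, h x]
    exact mul_neg_of_pos_of_neg hc hx

lemma negIndex_le_finrank_of_nonneg_on_ker {V : Type*} [AddCommGroup V] [Module ℂ V]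
    [FiniteDimensional ℂ V] {S : E →L[ℂ] E} (L : E →ₗ[ℂ] V)
    (h : ∀ x, L x = 0 → 0 ≤ (⟪S x, x⟫_ℂ).re) : negIndex S ≤ finrank ℂ V := by
  refine iSup_le fun ⟨M, hM⟩ => ?_
  have hinj : Function.Injective (L ∘ₗ M.subtype) := by
    refine (injective_iff_map_eq_zero _).mpr fun x hx => ?_
    by_contra hx0
    exact (h x hx).not_gt (hM x x.2 (by simpa using hx0))
  have := OrderHomClass.mono Cardinal.toENat (LinearMap.lift_rank_le_of_injective _ hinj)
  rwa [Cardinal.toENat_lift, Cardinal.toENat_lift, ← finrank_eq_rank ℂ V,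
    Cardinal.toENat_nat] at this

end NegIndex

section Symmetric

variable {E : Type*} [NormedAddCommGroup E] [InnerProductSpace ℂ E] {S : E →L[ℂ] E}

lemma exists_negDefOn_finrank_eq_negIndex (h : negIndex S < ⊤) :
    ∃ M : Submodule ℂ E, FiniteDimensional ℂ M ∧ NegDefOn S M ∧
      (finrank ℂ M : ℕ∞) = negIndex S := by
  obtain ⟨⟨M, hM⟩, hMeq⟩ := ENat.exists_eq_iSup_of_lt_top h
  change (Module.rank ℂ M).toENat = negIndex S at hMeq
  have : FiniteDimensional ℂ M :=
    rank_lt_aleph0_iff.mp (Cardinal.toENat_lt_top.mp (hMeq ▸ h))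
  refine ⟨M, this, hM, ?_⟩
  rw [← hMeq, ← finrank_eq_rank, Cardinal.toENat_nat]

lemma NegDefOn.sup_span_singleton (hS : (S : E →ₗ[ℂ] E).IsSymmetric) {N : Submodule ℂ E}
    (hN : NegDefOn S N) {p : E} (hp : p ∈ (N.map (S : E →ₗ[ℂ] E))ᗮ)
    (hpneg : (⟪S p, p⟫_ℂ).re < 0) : NegDefOn S (N ⊔ ℂ ∙ p) := by
  rintro _ hx hx0
  obtain ⟨n, hn, _, hc, rfl⟩ := mem_sup.mp hx
  obtain ⟨c, rfl⟩ := mem_span_singleton.mp hc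
  have hSn : ⟪S n, p⟫_ℂ = 0 := (mem_orthogonal _ _).mp hp _ ⟨n, hn, rfl⟩
  have hSp : ⟪S p, n⟫_ℂ = 0 := by
    rw [← inner_conj_symm, ← ContinuousLinearMap.coe_coe, ← hS, ContinuousLinearMap.coe_coe,
      hSn, map_zero]
  have hsplit : ⟪S (n + c • p), n + c • p⟫_ℂ = ⟪S n, n⟫_ℂ + Complex.normSq c * ⟪S p, p⟫_ℂ := by
    rw [Complex.normSq_eq_conj_mul_self]
    simp only [map_add, map_smul, inner_add_left, inner_add_right, inner_smul_left,
      inner_smul_right, hSn, hSp]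
    ring
  rw [hsplit, Complex.add_re, Complex.re_ofReal_mul]
  rcases eq_or_ne n 0 with rfl | hn0
  · have hc0 : c ≠ 0 := by rintro rfl; simp at hx0
    simpa using mul_neg_of_pos_of_neg (Complex.normSq_pos.mpr hc0) hpneg
  · nlinarith [hN n hn hn0, Complex.normSq_nonneg c]

lemma exists_finrank_le_negIndex_nonneg_on_orthogonal (hS : (S : E →ₗ[ℂ] E).IsSymmetric)
    (h : negIndex S < ⊤) :
    ∃ K : Submodule ℂ E, FiniteDimensional ℂ K ∧ (finrank ℂ K : ℕ∞) ≤ negIndex S ∧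
      ∀ x ∈ Kᗮ, 0 ≤ (⟪S x, x⟫_ℂ).re := by
  obtain ⟨N, _, hN, hNeq⟩ := exists_negDefOn_finrank_eq_negIndex h
  refine ⟨N.map (S : E →ₗ[ℂ] E), inferInstance, hNeq ▸ by exact_mod_cast finrank_map_le _ _,
    fun p hp => ?_⟩
  by_contra! hpneg
  have hpN : p ∉ N := fun hpN => by
    have hSp : ⟪S p, p⟫_ℂ = 0 := (mem_orthogonal _ _).mp hp _ ⟨p, hpN, rfl⟩
    simp [hSp] at hpneg
  have hlt := finrank_lt_finrank_of_lt (lt_sup_iff_notMem.mpr hpN)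
  have hle := (hN.sup_span_singleton hS hp hpneg).finrank_le_negIndex
  rw [← hNeq] at hle
  exact hlt.not_ge (by exact_mod_cast hle)

end Symmetric

section Block

variable {E F : Type*} [NormedAddCommGroup E] [InnerProductSpace ℂ E]
  [NormedAddCommGroup F] [InnerProductSpace ℂ F]

@[simp]
lemma blockOp_apply_fst (A11 : E →L[ℂ] E) (A12 : F →L[ℂ] E) (A21 : E →L[ℂ] F)
    (A22 : F →L[ℂ] F) (x : WithLp 2 (E × F)) :
    (blockOp A11 A12 A21 A22 x).fst = A11 x.fst + A12 x.snd := rfl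

@[simp]
lemma blockOp_apply_snd (A11 : E →L[ℂ] E) (A12 : F →L[ℂ] E) (A21 : E →L[ℂ] F)
    (A22 : F →L[ℂ] F) (x : WithLp 2 (E × F)) :
    (blockOp A11 A12 A21 A22 x).snd = A21 x.fst + A22 x.snd := rfl

lemma re_inner_blockOp_diag_self (A : E →L[ℂ] E) (B : F →L[ℂ] F) (x : WithLp 2 (E × F)) :
    (⟪blockOp A 0 0 B x, x⟫_ℂ).re = (⟪A x.fst, x.fst⟫_ℂ).re + (⟪B x.snd, x.snd⟫_ℂ).re := by
  simp

lemma negIndex_add_negIndex_le_negIndex_blockOp (A : E →L[ℂ] E) (B : F →L[ℂ] F) :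
    negIndex A + negIndex B ≤ negIndex (blockOp A 0 0 B) := by
  refine ENat.iSup_add_iSup_le fun ⟨M₁, hM₁⟩ ⟨M₂, hM₂⟩ => ?_
  let G : M₁ × M₂ →ₗ[ℂ] WithLp 2 (E × F) :=
    (WithLp.linearEquiv 2 ℂ (E × F)).symm.toLinearMap ∘ₗ M₁.subtype.prodMap M₂.subtype
  have hG : Function.Injective G :=
    (WithLp.linearEquiv 2 ℂ (E × F)).symm.injective.comp
      (Subtype.val_injective.prodMap Subtype.val_injective)
  have hneg : NegDefOn (blockOp A 0 0 B) (LinearMap.range G) := by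
    rintro _ ⟨⟨y₁, y₂⟩, rfl⟩ hy0
    rw [re_inner_blockOp_diag_self]
    rcases eq_or_ne y₁ 0 with rfl | hy₁
    · have hy₂ : y₂ ≠ 0 := by rintro rfl; simp [G] at hy0
      simpa [G] using hM₂ y₂ y₂.2 (by simpa using hy₂)
    · have h₁ := hM₁ y₁ y₁.2 (by simpa using hy₁)
      rcases eq_or_ne y₂ 0 with rfl | hy₂
      · simpa [G] using h₁
      · have h₂ := hM₂ y₂ y₂.2 (by simpa using hy₂)
        simpa [G] using add_neg h₁ h₂
  calc (Module.rank ℂ M₁).toENat + (Module.rank ℂ M₂).toENat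
      = (Module.rank ℂ (LinearMap.range G)).toENat := by
        rw [rank_range_of_injective G hG, rank_prod, map_add, Cardinal.toENat_lift,
          Cardinal.toENat_lift]
    _ ≤ negIndex (blockOp A 0 0 B) := hneg.rank_le_negIndex

lemma negIndex_blockOp_le_negIndex_add_negIndex {A : E →L[ℂ] E} {B : F →L[ℂ] F}
    (hA : (A : E →ₗ[ℂ] E).IsSymmetric) (hB : (B : F →ₗ[ℂ] F).IsSymmetric) :
    negIndex (blockOp A 0 0 B) ≤ negIndex A + negIndex B := by
  rcases eq_top_or_lt_top (negIndex A) with hA' | hA'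
  · simp [hA']
  rcases eq_top_or_lt_top (negIndex B) with hB' | hB'
  · simp [hB']
  obtain ⟨K₁, _, hK₁, hK₁nonneg⟩ := exists_finrank_le_negIndex_nonneg_on_orthogonal hA hA'
  obtain ⟨K₂, _, hK₂, hK₂nonneg⟩ := exists_finrank_le_negIndex_nonneg_on_orthogonal hB hB'
  let L : WithLp 2 (E × F) →ₗ[ℂ] K₁ × K₂ :=
    (K₁.orthogonalProjectionOnto.toLinearMap ∘ₗ WithLp.fstₗ 2 ℂ E F).prod
      (K₂.orthogonalProjectionOnto.toLinearMap ∘ₗ WithLp.sndₗ 2 ℂ E F)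
  have hL : ∀ x, L x = 0 → 0 ≤ (⟪blockOp A 0 0 B x, x⟫_ℂ).re := fun x hx => by
    rw [re_inner_blockOp_diag_self]
    obtain ⟨hx₁, hx₂⟩ := Prod.ext_iff.mp hx
    exact add_nonneg (hK₁nonneg _ (orthogonalProjectionOnto_eq_zero_iff.mp hx₁))
      (hK₂nonneg _ (orthogonalProjectionOnto_eq_zero_iff.mp hx₂))
  calc negIndex (blockOp A 0 0 B) ≤ finrank ℂ (K₁ × K₂) :=
        negIndex_le_finrank_of_nonneg_on_ker L hL
    _ = finrank ℂ K₁ + finrank ℂ K₂ := by rw [finrank_prod]; push_cast; rfl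
    _ ≤ negIndex A + negIndex B := add_le_add hK₁ hK₂

lemma negIndex_blockOp_diag {A : E →L[ℂ] E} {B : F →L[ℂ] F}
    (hA : (A : E →ₗ[ℂ] E).IsSymmetric) (hB : (B : F →ₗ[ℂ] F).IsSymmetric) :
    negIndex (blockOp A 0 0 B) = negIndex A + negIndex B :=
  (negIndex_blockOp_le_negIndex_add_negIndex hA hB).antisymm
    (negIndex_add_negIndex_le_negIndex_blockOp A B)

end Block

lemma WithLp.prod_ext {p : ENNReal} {α β : Type*} {x y : WithLp p (α × β)} (h₁ : x.fst = y.fst)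
    (h₂ : x.snd = y.snd) : x = y :=
  WithLp.ofLp_injective p (Prod.ext h₁ h₂)

section Congruence

variable {E : Type*} [NormedAddCommGroup E] [InnerProductSpace ℂ E]

lemma negIndex_blockOp_eq_schur {A B J : E →L[ℂ] E} (hB : (B : E →ₗ[ℂ] E).IsSymmetric)
    (hJ : (J : E →ₗ[ℂ] E).IsSymmetric) (hJJ : J ∘L J = 1) :
    negIndex (blockOp A B B J) = negIndex (blockOp (A - B ∘L J ∘L B) 0 0 J) := by
  have hJJ' : ∀ x, J (J x) = x := fun x => by simpa using DFunLike.congr_fun hJJ x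
  let G : WithLp 2 (E × E) ≃ₗ[ℂ] WithLp 2 (E × E) :=
    .ofLinearMap (blockOp 1 0 (-(J ∘L B)) 1).toLinearMap (blockOp 1 0 (J ∘L B) 1).toLinearMap
      (LinearMap.ext fun x => WithLp.prod_ext (by simp) (by simp))
      (LinearMap.ext fun x => WithLp.prod_ext (by simp) (by simp))
  refine negIndex_eq_of_linearEquiv G one_pos fun x => ?_
  rw [one_mul]
  congr 1
  have hB' : ∀ u v, ⟪B u, v⟫_ℂ = ⟪u, B v⟫_ℂ := hB
  have hJ' : ∀ u v, ⟪J u, v⟫_ℂ = ⟪u, J v⟫_ℂ := hJ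
  simp [G, inner_add_left, inner_sub_left, hJJ', hJ' x.snd, hB' x.snd]
  ring

lemma negIndex_blockOp_eq_add_sub (A B : E →L[ℂ] E) :
    negIndex (blockOp A B B A) = negIndex (blockOp (A + B) 0 0 (A - B)) := by
  let f : WithLp 2 (E × E) →ₗ[ℂ] WithLp 2 (E × E) := (blockOp 1 1 1 (-1)).toLinearMap
  have hf : ∀ x, f ((2 : ℂ)⁻¹ • f x) = x := fun x => WithLp.prod_ext
    (by simp [f]; module) (by simp [f]; module)
  let G : WithLp 2 (E × E) ≃ₗ[ℂ] WithLp 2 (E × E) :=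
    .ofLinearMap f ((2 : ℂ)⁻¹ • f) (LinearMap.ext hf) (LinearMap.ext fun x => by simpa using hf x)
  refine negIndex_eq_of_linearEquiv G two_pos fun x => ?_
  have : ⟪blockOp A B B A (G x), G x⟫_ℂ = (2 : ℝ) * ⟪blockOp (A + B) 0 0 (A - B) x, x⟫_ℂ := by
    simp [G, f, inner_add_left, inner_add_right, inner_sub_left]
    ring
  rw [this, Complex.re_ofReal_mul]

end Congruence

theorem statement_9
    {H : Type*} [NormedAddCommGroup H] [InnerProductSpace ℂ H] [CompleteSpace H]
    (T : H →L[ℂ] H) (hT : IsSelfAdjoint T)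
    (J : H →L[ℂ] H) (hJsa : IsSelfAdjoint J) (hJsq : J ∘L J = 1)
    (hfinJ : negIndex J < ⊤) :
    negIndex (J - T ∘L J ∘L T) + negIndex J = negIndex (J - T) + negIndex (J + T) ∧
    (negIndex (J - T ∘L J ∘L T) < ⊤ ↔ negIndex (J - T) < ⊤ ∧ negIndex (J + T) < ⊤) := by
  have hTs := hT.isSymmetric
  have hJs := hJsa.isSymmetric
  have hSchur : ((J - T ∘L J ∘L T : H →L[ℂ] H) : H →ₗ[ℂ] H).IsSymmetric :=
    (hJsa.sub (hJsa.conjugate_self hT)).isSymmetric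
  have key : negIndex (J - T ∘L J ∘L T) + negIndex J = negIndex (J - T) + negIndex (J + T) := by
    rw [← negIndex_blockOp_diag hSchur hJs, ← negIndex_blockOp_eq_schur hTs hJs hJsq,
      negIndex_blockOp_eq_add_sub, negIndex_blockOp_diag (hJs.add hTs) (hJs.sub hTs), add_comm]
  refine ⟨key, ?_⟩
  rw [← ENat.add_lt_top, ← key, ENat.add_lt_top, and_iff_left hfinJ]
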